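/- arXiv:2310.09110 — 2 statements merged into one kernel-verified Lean document; each statement's English description precedes it below -/
import Mathlib

section
/- For every r ≥ 1, one has I_r^0 = L(ℤ_p)·I_r: every g ∈ I_r^0 can be written as g = l·h with l ∈ GL_n(ℤ_p) block diagonal (for the given partition) and h ∈ I_r. -/
/-!
STATEMENT 3: For every r ≥ 1, one has I_r^0 = L(ℤ_p)·I_r: an element g of GL_n(ℤ_p) lies
in the P-Iwahori subgroup I_r^0 if and only if it can be written as g = l·h with
l ∈ GL_n(ℤ_p) block diagonal (for the given partition) and h ∈ I_r.
-/

open Matrix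

noncomputable section
namespace PIw

/-- Partial sums of the partition: `Dsum nn j = n_1 + ⋯ + n_j` (`nn` is 0-indexed). -/
def Dsum {t : ℕ} (nn : Fin t → ℕ) (j : ℕ) : ℕ :=
  ∑ i ∈ Finset.range j, if h : i < t then nn ⟨i, h⟩ else 0

/-- Index (0-indexed) of the block containing position `k`. -/
def blkOf {t : ℕ} (nn : Fin t → ℕ) (k : ℕ) : ℕ :=
  ((Finset.range t).filter fun j => Dsum nn (j + 1) ≤ k).card

/-- The block function on `Fin n`. -/
def bfun {t : ℕ} (nn : Fin t → ℕ) : Fin (Dsum nn t) → ℕ := fun k => blkOf nn (k : ℕ)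

/-- Block upper triangular (entries strictly below the diagonal blocks vanish). -/
def IsBlockUpper {t : ℕ} (nn : Fin t → ℕ) {R : Type*} [CommRing R]
    (M : Matrix (Fin (Dsum nn t)) (Fin (Dsum nn t)) R) : Prop :=
  M.BlockTriangular (bfun nn)

/-- Block diagonal: entries outside the diagonal blocks vanish. -/
def IsBlockDiag {t : ℕ} (nn : Fin t → ℕ) {R : Type*} [CommRing R]
    (M : Matrix (Fin (Dsum nn t)) (Fin (Dsum nn t)) R) : Prop :=
  ∀ k l, bfun nn k ≠ bfun nn l → M k l = 0

/-- Block upper triangular with identity diagonal blocks. -/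
def IsBlockUnipotent {t : ℕ} (nn : Fin t → ℕ) {R : Type*} [CommRing R]
    (M : Matrix (Fin (Dsum nn t)) (Fin (Dsum nn t)) R) : Prop :=
  IsBlockUpper nn M ∧
    ∀ k l, bfun nn k = bfun nn l → M k l = if k = l then 1 else 0

variable (p : ℕ) [Fact p.Prime]

/-- Entrywise reduction mod `p^r`. -/
def redMat (r : ℕ) {N : ℕ} (M : Matrix (Fin N) (Fin N) ℤ_[p]) :
    Matrix (Fin N) (Fin N) (ZMod (p ^ r)) :=
  M.map (PadicInt.toZModPow r)

/-- Membership in the `P`-Iwahori subgroup `I_r^0`. -/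
def memIw0 {t : ℕ} (nn : Fin t → ℕ) (r : ℕ) (g : GL (Fin (Dsum nn t)) ℤ_[p]) : Prop :=
  IsBlockUpper nn (redMat p r g.val)

/-- Membership in the pro-`p` `P`-Iwahori subgroup `I_r`. -/
def memIw {t : ℕ} (nn : Fin t → ℕ) (r : ℕ) (g : GL (Fin (Dsum nn t)) ℤ_[p]) : Prop :=
  IsBlockUnipotent nn (redMat p r g.val)

/-!
Let `A` be the block-diagonal part of `g ∈ I_r^0`. Modulo `p^r`, `g` is block upper triangular,
so `det A ≡ det g` and `det A` is a unit of the local ring `ℤ_p`. Then `l = A` and `h = A⁻¹ g`: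
the inverse of a block-diagonal matrix is block diagonal, so `A⁻¹ g` is block upper triangular
modulo `p^r`, and its diagonal blocks are those of `A⁻¹ A = 1`.
-/

section BlockDiagonalPart

open OrderDual

variable {ι α R S : Type*} [LinearOrder α] {b : ι → α}

variable (b) in
def blockDiagonalPart [Zero R] (M : Matrix ι ι R) : Matrix ι ι R :=
  fun i j => if b i = b j then M i j else 0

theorem blockDiagonalPart_apply_of_ne [Zero R] (M : Matrix ι ι R) {i j : ι} (h : b i ≠ b j) :
    blockDiagonalPart b M i j = 0 :=
  if_neg h

theorem blockDiagonalPart_apply_of_eq [Zero R] (M : Matrix ι ι R) {i j : ι} (h : b i = b j) :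
    blockDiagonalPart b M i j = M i j :=
  if_pos h

theorem blockDiagonalPart_map [Zero R] [Zero S] (f : R → S) (hf : f 0 = 0) (M : Matrix ι ι R) :
    blockDiagonalPart b (M.map f) = (blockDiagonalPart b M).map f := by
  ext i j
  by_cases h : b i = b j <;> simp [blockDiagonalPart, h, hf]

theorem blockTriangular_of_blockDiagonal [Zero R] {M : Matrix ι ι R}
    (hM : ∀ i j, b i ≠ b j → M i j = 0) : M.BlockTriangular b :=
  fun _ _ h => hM _ _ h.ne'

theorem blockTriangular_toDual_of_blockDiagonal [Zero R] {M : Matrix ι ι R}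
    (hM : ∀ i j, b i ≠ b j → M i j = 0) : M.BlockTriangular (toDual ∘ b) :=
  fun _ _ h => hM _ _ (toDual_lt_toDual.mp h).ne

theorem det_blockDiagonalPart_of_blockTriangular [Fintype ι] [DecidableEq ι] [CommRing R]
    {M : Matrix ι ι R} (hM : M.BlockTriangular b) : (blockDiagonalPart b M).det = M.det := by
  classical
  rw [(blockTriangular_of_blockDiagonal fun _ _ => blockDiagonalPart_apply_of_ne M).det, hM.det]
  refine Finset.prod_congr rfl fun a _ => congrArg det ?_
  ext i j
  exact blockDiagonalPart_apply_of_eq M (i.2.trans j.2.symm)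

theorem inv_apply_eq_zero_of_blockDiagonal [Fintype ι] [DecidableEq ι] [CommRing R]
    {M : Matrix ι ι R} (hM : ∀ i j, b i ≠ b j → M i j = 0) {i j : ι} (h : b i ≠ b j) :
    M⁻¹ i j = 0 := by
  by_cases hdet : IsUnit M.det
  · have := M.invertibleOfIsUnitDet hdet
    rcases h.lt_or_gt with hlt | hgt
    · exact blockTriangular_inv_of_blockTriangular (b := toDual ∘ b)
        (blockTriangular_toDual_of_blockDiagonal hM) (toDual_lt_toDual.mpr hlt)
    · exact blockTriangular_inv_of_blockTriangular (blockTriangular_of_blockDiagonal hM) hgt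
  · simp [nonsing_inv_apply_not_isUnit M hdet]

theorem inv_blockDiagonalPart_apply_of_ne [Fintype ι] [DecidableEq ι] [CommRing R]
    (M : Matrix ι ι R) {i j : ι} (h : b i ≠ b j) : (blockDiagonalPart b M)⁻¹ i j = 0 :=
  inv_apply_eq_zero_of_blockDiagonal (fun _ _ => blockDiagonalPart_apply_of_ne M) h

theorem mul_apply_eq_of_blockDiagonal [Fintype ι] [CommRing R] {A M N : Matrix ι ι R}
    (hA : ∀ i j, b i ≠ b j → A i j = 0) (hMN : ∀ i j, b i = b j → M i j = N i j) {i j : ι}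
    (h : b i = b j) : (A * M) i j = (A * N) i j := by
  simp only [mul_apply]
  refine Finset.sum_congr rfl fun k _ => ?_
  by_cases hk : b i = b k
  · rw [hMN k j (hk.symm.trans h)]
  · simp [hA i k hk]

theorem inv_blockDiagonalPart_mul_apply_of_eq [Fintype ι] [DecidableEq ι] [CommRing R]
    {M : Matrix ι ι R} (hdet : IsUnit (blockDiagonalPart b M).det) {i j : ι} (h : b i = b j) :
    ((blockDiagonalPart b M)⁻¹ * M) i j = (1 : Matrix ι ι R) i j := by
  rw [mul_apply_eq_of_blockDiagonal (N := blockDiagonalPart b M)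
    (fun _ _ => inv_blockDiagonalPart_apply_of_ne M)
    (fun _ _ hkl => (blockDiagonalPart_apply_of_eq M hkl).symm) h, nonsing_inv_mul _ hdet]

theorem blockTriangular_map_blockDiagonal_mul [Fintype ι] [CommRing R] [CommRing S] (f : R →+* S)
    {A M : Matrix ι ι R} (hA : ∀ i j, b i ≠ b j → A i j = 0) (hM : (M.map f).BlockTriangular b) :
    ((A * M).map f).BlockTriangular b := by
  rw [Matrix.map_mul]
  exact ((blockTriangular_of_blockDiagonal hA).map f).mul hM

theorem isUnit_det_blockDiagonalPart [Fintype ι] [DecidableEq ι] [CommRing R] [CommRing S]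
    (f : R →+* S) [IsLocalHom f] {M : Matrix ι ι R} (hM : (M.map f).BlockTriangular b)
    (hdet : IsUnit M.det) : IsUnit (blockDiagonalPart b M).det := by
  refine isUnit_of_map_unit f _ ?_
  rw [RingHom.map_det, RingHom.mapMatrix_apply, ← blockDiagonalPart_map f f.map_zero,
    det_blockDiagonalPart_of_blockTriangular hM, ← RingHom.mapMatrix_apply, ← RingHom.map_det]
  exact hdet.map f

end BlockDiagonalPart

theorem isLocalHom_toZModPow {r : ℕ} (hr : 1 ≤ r) : IsLocalHom (PadicInt.toZModPow (p := p) r) :=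
  have : Nontrivial (ZMod (p ^ r)) := ZMod.nontrivial_iff.mpr
    (Nat.one_lt_pow (by omega) (Fact.out : p.Prime).one_lt).ne'
  IsLocalHom.of_surjective _ (ZMod.ringHom_surjective _)

theorem iw0_eq_levi_mul_iw {t : ℕ} (nn : Fin t → ℕ)
    (r : ℕ) (hr : 1 ≤ r) (g : GL (Fin (Dsum nn t)) ℤ_[p]) :
    memIw0 p nn r g ↔
      ∃ l h : GL (Fin (Dsum nn t)) ℤ_[p],
        IsBlockDiag nn l.val ∧ memIw p nn r h ∧ g = l * h := by
  have := isLocalHom_toZModPow p hr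
  constructor
  · intro hg
    set A := blockDiagonalPart (bfun nn) g.val
    have hA : IsUnit A.det := isUnit_det_blockDiagonalPart _ hg (g.isUnit.map detMonoidHom)
    set L := A.nonsingInvUnit hA
    refine ⟨L, L⁻¹ * g, fun _ _ => blockDiagonalPart_apply_of_ne _, ⟨?_, fun i j hij => ?_⟩,
      (mul_inv_cancel_left L g).symm⟩
    · exact blockTriangular_map_blockDiagonal_mul _
        (fun _ _ => inv_blockDiagonalPart_apply_of_ne _) hg
    · change PadicInt.toZModPow r ((A⁻¹ * g.val) i j) = _
      rw [inv_blockDiagonalPart_mul_apply_of_eq hA hij, one_apply]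
      split_ifs <;> simp
  · rintro ⟨l, h, hl, hh, rfl⟩
    exact blockTriangular_map_blockDiagonal_mul _ hl hh.1

end PIw
end
end

section
/- For every r ≥ 1, every block boundary i = D(j) (1 ≤ j ≤ t), and every X ∈ I_r, there exists a unique pair (B', Y) consisting of an i×(n−i) matrix B' with all entries in {0, 1, …, p−1} and an element Y ∈ I_r, such that X = u(B')·(t_i Y t_i^{−1}) in GL_n(ℚ_p); in particular, t_i^{−1}·(u(B')^{−1} X)·t_i has all entries in ℤ_p and lies in I_r. -/
/-!
STATEMENT 4: For every r ≥ 1, every block boundary i = D(j) (1 ≤ j ≤ t), and every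
X ∈ I_r, there exists a unique pair (B', Y) consisting of an i×(n−i) matrix B' with all
entries in {0, 1, …, p−1} and an element Y ∈ I_r, such that X = u(B')·(t_i Y t_i^{−1})
in GL_n(ℚ_p); in particular, t_i^{−1}·(u(B')^{−1} X)·t_i has all entries in ℤ_p and lies
in I_r.
-/

open Matrix

noncomputable section
namespace PIw

variable (p : ℕ) [Fact p.Prime]

/-- Coefficient-wise inclusion `ℤ_p → ℚ_p` on matrices. -/
def toQ {N : ℕ} (M : Matrix (Fin N) (Fin N) ℤ_[p]) : Matrix (Fin N) (Fin N) ℚ_[p] :=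
  M.map (fun x => (x : ℚ_[p]))

/-- The matrix `t_i = diag(p·1_i, 1_{n-i})` in `GL_n(ℚ_p)`. -/
def tMat (N i : ℕ) : Matrix (Fin N) (Fin N) ℚ_[p] :=
  Matrix.diagonal fun k => if (k : ℕ) < i then (p : ℚ_[p]) else 1

/-- The matrix `t_i⁻¹ = diag(p⁻¹·1_i, 1_{n-i})` in `GL_n(ℚ_p)`. -/
def tInvMat (N i : ℕ) : Matrix (Fin N) (Fin N) ℚ_[p] :=
  Matrix.diagonal fun k => if (k : ℕ) < i then (p : ℚ_[p])⁻¹ else 1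

/-- The unipotent matrix `u(B) = (1_i, B; 0, 1_{n-i})`, where `B` is an `i × (n-i)`
matrix of natural numbers (viewed in `ℚ_p`). -/
def uMat (N i : ℕ) (B : Matrix (Fin i) (Fin (N - i)) ℕ) :
    Matrix (Fin N) (Fin N) ℚ_[p] := fun k l =>
  if h : (k : ℕ) < i ∧ i ≤ (l : ℕ) then
    (B ⟨(k : ℕ), h.1⟩ ⟨(l : ℕ) - i, Nat.sub_lt_sub_right h.2 l.isLt⟩ : ℚ_[p])
  else if k = l then 1 else 0

/-!
Split the indices at the block boundary `i` and write `X = (A P; C D)`; membership `X ∈ I_r`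
gives `C ≡ 0 mod p^r`. After clearing `t_i⁻¹` the equation reads `X t = u(B) t Y` over `ℤ_p`,
which forces `Y = (A - B C, (P - B D)/p; p C, D)`. Hence `Y` is integral exactly when
`B ≡ P D⁻¹ (mod p)`, where `D` is invertible mod `p` because `X` is and `C ≡ 0`; this determines
the digit matrix `B`, and then `Y`. Moreover `det Y = det X`, and since `C ≡ 0 mod p^r`, `Y`
agrees with `X` modulo `p^r` outside the upper right block, on which `I_r` imposes nothing.
-/

section BlockAlgebra

variable {m n R : Type*} [DecidableEq m] [DecidableEq n] [CommRing R]

def blockScale (c : R) : Matrix (m ⊕ n) (m ⊕ n) R := fromBlocks (c • 1) 0 0 1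

theorem blockScale_map {S : Type*} [CommRing S] (f : R →+* S) (c : R) :
    (blockScale c : Matrix (m ⊕ n) (m ⊕ n) R).map f = blockScale (f c) := by
  simp [blockScale, fromBlocks_map, Matrix.map_smulₛₗ f f c (map_mul f c)]

variable [Fintype m] [Fintype n]

theorem det_blockScale (c : R) :
    (blockScale c : Matrix (m ⊕ n) (m ⊕ n) R).det = c ^ Fintype.card m := by
  simp [blockScale]

variable [IsDomain R] {c : R}

theorem mul_blockScale_eq_iff (hc : c ≠ 0) {X Y : Matrix (m ⊕ n) (m ⊕ n) R}
    {B : Matrix m n R} :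
    X * blockScale c = fromBlocks 1 B 0 1 * blockScale c * Y ↔
      Y.toBlocks₁₁ = X.toBlocks₁₁ - B * X.toBlocks₂₁ ∧
        c • Y.toBlocks₁₂ = X.toBlocks₁₂ - B * X.toBlocks₂₂ ∧
        Y.toBlocks₂₁ = c • X.toBlocks₂₁ ∧ Y.toBlocks₂₂ = X.toBlocks₂₂ := by
  obtain ⟨A, P, C, D, rfl⟩ : ∃ A P C D, X = fromBlocks A P C D :=
    ⟨_, _, _, _, (fromBlocks_toBlocks X).symm⟩
  obtain ⟨A', P', C', D', rfl⟩ : ∃ A P C D, Y = fromBlocks A P C D :=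
    ⟨_, _, _, _, (fromBlocks_toBlocks Y).symm⟩
  simp only [blockScale, fromBlocks_multiply, fromBlocks_inj, toBlocks_fromBlocks₁₁,
    toBlocks_fromBlocks₁₂, toBlocks_fromBlocks₂₁, toBlocks_fromBlocks₂₂, Matrix.mul_one,
    Matrix.one_mul, Matrix.mul_zero, Matrix.zero_mul, Matrix.mul_smul, Matrix.smul_mul, smul_zero,
    add_zero, zero_add]
  constructor
  · rintro ⟨h₁₁, h₁₂, rfl, rfl⟩
    refine ⟨?_, by rw [h₁₂]; abel, rfl, rfl⟩
    rw [Matrix.mul_smul, ← smul_add, smul_right_inj hc] at h₁₁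
    rw [h₁₁, add_sub_cancel_right]
  · rintro ⟨rfl, h₁₂, rfl, rfl⟩
    refine ⟨?_, by rw [h₁₂]; abel, rfl, rfl⟩
    rw [Matrix.mul_smul, ← smul_add, sub_add_cancel]

variable {X Y : Matrix (m ⊕ n) (m ⊕ n) R} {B : Matrix m n R}

theorem det_eq_of_mul_blockScale_eq (hc : c ≠ 0)
    (h : X * blockScale c = fromBlocks 1 B 0 1 * blockScale c * Y) : Y.det = X.det := by
  have hdet := congrArg det h
  rw [det_mul, det_mul, det_mul, det_fromBlocks_zero₂₁, det_one, det_one, det_blockScale] at hdet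
  exact mul_left_cancel₀ (pow_ne_zero _ hc) (by linear_combination -hdet)

theorem eq_of_mul_blockScale_eq (hc : c ≠ 0) {Y' : Matrix (m ⊕ n) (m ⊕ n) R}
    (h : X * blockScale c = fromBlocks 1 B 0 1 * blockScale c * Y)
    (h' : X * blockScale c = fromBlocks 1 B 0 1 * blockScale c * Y') : Y = Y' := by
  obtain ⟨h₁₁, h₁₂, h₂₁, h₂₂⟩ := (mul_blockScale_eq_iff hc).1 h
  obtain ⟨h₁₁', h₁₂', h₂₁', h₂₂'⟩ := (mul_blockScale_eq_iff hc).1 h'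
  rw [← fromBlocks_toBlocks Y, ← fromBlocks_toBlocks Y', h₁₁, h₁₁', h₂₁, h₂₁', h₂₂, h₂₂',
    (smul_right_injective _ hc) (h₁₂.trans h₁₂'.symm)]

theorem map_apply_eq_of_mul_blockScale_eq {S : Type*} [CommRing S] (f : R →+* S) (hc : c ≠ 0)
    (h : X * blockScale c = fromBlocks 1 B 0 1 * blockScale c * Y)
    (hC : X.toBlocks₂₁.map f = 0) {k l : m ⊕ n} (hkl : k.isLeft → l.isLeft) :
    f (Y k l) = f (X k l) := by
  obtain ⟨h₁₁, -, h₂₁, h₂₂⟩ := (mul_blockScale_eq_iff hc).1 h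
  have h₁₁' : Y.toBlocks₁₁.map f = X.toBlocks₁₁.map f := by
    rw [h₁₁, Matrix.map_sub f (map_sub f), Matrix.map_mul, hC, Matrix.mul_zero, sub_zero]
  have h₂₁' : Y.toBlocks₂₁.map f = X.toBlocks₂₁.map f := by
    rw [h₂₁, Matrix.map_smulₛₗ f f c (map_mul f c), hC, smul_zero]
  rcases k with a | a <;> rcases l with b | b
  · exact congrFun (congrFun h₁₁' a) b
  · simp at hkl
  · exact congrFun (congrFun h₂₁' a) b
  · exact congrArg f (congrFun (congrFun h₂₂ a) b)

end BlockAlgebra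

section PadicBlocks

variable {p} {m n : Type*}

theorem exists_smul_eq_iff_map_toZMod_eq_zero (M : Matrix m n ℤ_[p]) :
    (∃ M', (p : ℤ_[p]) • M' = M) ↔ M.map PadicInt.toZMod = 0 := by
  have hdvd : ∀ x : ℤ_[p], (p : ℤ_[p]) ∣ x ↔ PadicInt.toZMod x = 0 := fun x => by
    rw [← Ideal.mem_span_singleton, ← PadicInt.maximalIdeal_eq_span_p, ← PadicInt.ker_toZMod,
      RingHom.mem_ker]
  constructor
  · rintro ⟨M', rfl⟩
    ext a b
    exact (hdvd _).1 (dvd_mul_right _ _)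
  · intro h
    choose M' hM' using fun a b => (hdvd (M a b)).2 (congrFun (congrFun h a) b)
    exact ⟨M', by ext a b; exact (hM' a b).symm⟩

theorem map_toZMod_eq_zero_of_map_toZModPow_eq_zero {r : ℕ} (hr : 1 ≤ r) {M : Matrix m n ℤ_[p]}
    (h : M.map (PadicInt.toZModPow r) = 0) : M.map PadicInt.toZMod = 0 := by
  ext a b
  have hx : M a b ∈ RingHom.ker (PadicInt.toZModPow r) := congrFun (congrFun h a) b
  rw [PadicInt.ker_toZModPow, Ideal.mem_span_singleton] at hx
  show PadicInt.toZMod (M a b) = 0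
  rw [← RingHom.mem_ker, PadicInt.ker_toZMod, PadicInt.maximalIdeal_eq_span_p,
    Ideal.mem_span_singleton]
  exact (dvd_pow_self _ (by omega)).trans hx

theorem existsUnique_digits (M : Matrix m n (ZMod p)) :
    ∃! B : Matrix m n ℕ, (∀ a b, B a b < p) ∧ B.map (Nat.cast : ℕ → ZMod p) = M :=
  ⟨M.map ZMod.val, ⟨fun _ _ => ZMod.val_lt _, by ext; simp⟩, fun B ⟨hB, hBM⟩ => by
    ext a b
    rw [← hBM]
    simp [ZMod.val_cast_of_lt (hB a b)]⟩

variable [Fintype m] [Fintype n] [DecidableEq m] [DecidableEq n]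

theorem exists_mul_blockScale_eq_iff (X : Matrix (m ⊕ n) (m ⊕ n) ℤ_[p]) (B : Matrix m n ℕ) :
    (∃ Y, X * blockScale (p : ℤ_[p]) =
        fromBlocks 1 (B.map (Nat.cast : ℕ → ℤ_[p])) 0 1 * blockScale (p : ℤ_[p]) * Y) ↔
      B.map (Nat.cast : ℕ → ZMod p) * (X.map PadicInt.toZMod).toBlocks₂₂ =
        (X.map PadicInt.toZMod).toBlocks₁₂ := by
  have hred : (X.toBlocks₁₂ - B.map (Nat.cast : ℕ → ℤ_[p]) * X.toBlocks₂₂).map PadicInt.toZMod =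
      (X.map PadicInt.toZMod).toBlocks₁₂ -
        B.map (Nat.cast : ℕ → ZMod p) * (X.map PadicInt.toZMod).toBlocks₂₂ := by
    rw [Matrix.map_sub _ (map_sub _), Matrix.map_mul, Matrix.map_map]
    simp only [Function.comp_def, map_natCast]
    rfl
  rw [eq_comm, ← sub_eq_zero, ← hred, ← exists_smul_eq_iff_map_toZMod_eq_zero]
  constructor
  · rintro ⟨Y, hY⟩
    exact ⟨_, ((mul_blockScale_eq_iff PadicInt.prime_p.ne_zero).1 hY).2.1⟩
  · rintro ⟨P, hP⟩
    exact ⟨fromBlocks (X.toBlocks₁₁ - B.map (Nat.cast : ℕ → ℤ_[p]) * X.toBlocks₂₁) P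
      ((p : ℤ_[p]) • X.toBlocks₂₁) X.toBlocks₂₂,
      (mul_blockScale_eq_iff PadicInt.prime_p.ne_zero).2 ⟨rfl, hP, rfl, rfl⟩⟩

theorem existsUnique_digits_mul_blockScale (X : GL (m ⊕ n) ℤ_[p])
    (hC : (X : Matrix (m ⊕ n) (m ⊕ n) ℤ_[p]).toBlocks₂₁.map PadicInt.toZMod = 0) :
    ∃! BY : Matrix m n ℕ × GL (m ⊕ n) ℤ_[p], (∀ a b, BY.1 a b < p) ∧
      X.val * blockScale (p : ℤ_[p]) =
        fromBlocks 1 (BY.1.map (Nat.cast : ℕ → ℤ_[p])) 0 1 * blockScale (p : ℤ_[p]) *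
          BY.2.val := by
  have hp : (p : ℤ_[p]) ≠ 0 := PadicInt.prime_p.ne_zero
  set X₀ := X.val.map PadicInt.toZMod
  have hD : IsUnit X₀.toBlocks₂₂.det := by
    have hX₀ : IsUnit X₀.det := by
      rw [show X₀.det = PadicInt.toZMod X.val.det from (RingHom.map_det _ _).symm]
      exact (isUnits_det_units X).map _
    rw [← fromBlocks_toBlocks X₀, show X₀.toBlocks₂₁ = 0 from hC, det_fromBlocks_zero₂₁] at hX₀
    exact isUnit_of_mul_isUnit_right hX₀
  obtain ⟨B, ⟨hB, hBX⟩, hBu⟩ := existsUnique_digits (X₀.toBlocks₁₂ * X₀.toBlocks₂₂⁻¹)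
  obtain ⟨Y, hY⟩ := (exists_mul_blockScale_eq_iff X.val B).2
    (by rw [hBX, nonsing_inv_mul_cancel_right _ _ hD])
  have hYdet : IsUnit Y.det := det_eq_of_mul_blockScale_eq hp hY ▸ isUnits_det_units X
  refine ⟨(B, ((isUnit_iff_isUnit_det Y).2 hYdet).unit), ⟨hB, hY⟩, ?_⟩
  rintro ⟨B', Y'⟩ ⟨hB', hY'⟩
  obtain rfl : B' = B := hBu B' ⟨hB', by
    rw [← (exists_mul_blockScale_eq_iff X.val B').1 ⟨_, hY'⟩, mul_nonsing_inv_cancel_right _ _ hD]⟩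
  exact Prod.ext rfl (Units.ext (eq_of_mul_blockScale_eq hp hY' hY))

end PadicBlocks

section FinSplit

variable {p} {i N : ℕ}

def finSplit (h : i ≤ N) : Fin i ⊕ Fin (N - i) ≃ Fin N :=
  finSumFinEquiv.trans (finCongr (Nat.add_sub_cancel' h))

@[simp]
theorem val_finSplit_inl (h : i ≤ N) (a : Fin i) : (finSplit h (.inl a) : ℕ) = a := rfl

@[simp]
theorem val_finSplit_inr (h : i ≤ N) (b : Fin (N - i)) : (finSplit h (.inr b) : ℕ) = i + b := rfl

theorem val_finSplit_lt_iff (h : i ≤ N) (k : Fin i ⊕ Fin (N - i)) :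
    (finSplit h k : ℕ) < i ↔ k.isLeft := by
  cases k <;> simp

theorem uMat_submatrix_finSplit (h : i ≤ N) (B : Matrix (Fin i) (Fin (N - i)) ℕ) :
    (uMat p N i B).submatrix (finSplit h) (finSplit h) =
      fromBlocks 1 (B.map (Nat.cast : ℕ → ℚ_[p])) 0 1 := by
  ext (a | a) (b | b) <;> simp [uMat, one_apply, Fin.ext_iff]

theorem tMat_submatrix_finSplit (h : i ≤ N) :
    (tMat p N i).submatrix (finSplit h) (finSplit h) = blockScale (p : ℚ_[p]) := by
  ext (a | a) (b | b) <;> simp [tMat, blockScale, diagonal_apply, one_apply, Fin.ext_iff]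

theorem tMat_mul_tInvMat : tMat p N i * tInvMat p N i = 1 := by
  have hp : (p : ℚ_[p]) ≠ 0 := Nat.cast_ne_zero.2 (Fact.out : p.Prime).ne_zero
  rw [tMat, tInvMat, diagonal_mul_diagonal, ← diagonal_one]
  congr 1
  ext k
  split_ifs
  exacts [mul_inv_cancel₀ hp, mul_one 1]

theorem toQ_eq_uMat_mul_conj_iff (h : i ≤ N) (X Y : Matrix (Fin N) (Fin N) ℤ_[p])
    (B : Matrix (Fin i) (Fin (N - i)) ℕ) :
    toQ p X = uMat p N i B * (tMat p N i * toQ p Y * tInvMat p N i) ↔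
      X.submatrix (finSplit h) (finSplit h) * blockScale (p : ℤ_[p]) =
        fromBlocks 1 (B.map (Nat.cast : ℕ → ℤ_[p])) 0 1 * blockScale (p : ℤ_[p]) *
          Y.submatrix (finSplit h) (finSplit h) := by
  set σ := finSplit h
  let T : (Matrix (Fin N) (Fin N) ℚ_[p])ˣ :=
    ⟨tMat p N i, tInvMat p N i, tMat_mul_tInvMat, mul_eq_one_comm.1 tMat_mul_tInvMat⟩
  have hconj : toQ p X = uMat p N i B * (T * toQ p Y * (↑T⁻¹ : Matrix (Fin N) (Fin N) ℚ_[p])) ↔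
      toQ p X * T = uMat p N i B * T * toQ p Y := by
    rw [← mul_assoc, ← mul_assoc, Units.eq_mul_inv_iff_mul_eq]
  refine hconj.trans ?_
  rw [← (reindex σ.symm σ.symm).injective.eq_iff,
    ← (Matrix.map_injective (f := PadicInt.Coe.ringHom) Subtype.val_injective).eq_iff]
  simp only [reindex_apply, Equiv.symm_symm]
  rw [← submatrix_mul_equiv _ _ _ σ, ← submatrix_mul_equiv _ _ _ σ, ← submatrix_mul_equiv _ _ _ σ,
    show (T : Matrix (Fin N) (Fin N) ℚ_[p]) = tMat p N i from rfl, tMat_submatrix_finSplit,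
    uMat_submatrix_finSplit, Matrix.map_mul, Matrix.map_mul, Matrix.map_mul, blockScale_map,
    fromBlocks_map, Matrix.map_map]
  simp only [Function.comp_def, map_natCast, map_one, map_zero, Matrix.map_one, Matrix.map_zero]
  exact Iff.rfl

end FinSplit

section Iwahori

variable {p} {t : ℕ} (nn : Fin t → ℕ)

theorem Dsum_mono : Monotone (Dsum nn) := fun _ _ h =>
  Finset.sum_le_sum_of_subset (Finset.range_subset_range.2 h)

theorem lt_Dsum_succ_iff (j : Fin t) (k : ℕ) : k < Dsum nn (j + 1) ↔ blkOf nn k ≤ j := by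
  constructor
  · intro hk
    calc blkOf nn k ≤ (Finset.range j).card := Finset.card_le_card fun j' hj' =>
          Finset.mem_range.2 <| Nat.succ_lt_succ_iff.1 <|
            (Dsum_mono nn).reflect_lt ((Finset.mem_filter.1 hj').2.trans_lt hk)
      _ = j := Finset.card_range _
  · intro hk
    by_contra! hle
    have hcard : (Finset.range (j + 1)).card ≤ blkOf nn k := Finset.card_le_card fun j' hj' =>
      Finset.mem_filter.2 ⟨Finset.mem_range.2 (by simp at hj'; omega),
        (Dsum_mono nn (by simp at hj'; omega)).trans hle⟩
    simp at hcard
    omega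

variable {nn} {r : ℕ} {j : Fin t}

theorem memIw_of_toZModPow_eq {X Y : GL (Fin (Dsum nn t)) ℤ_[p]} (hX : memIw p nn r X)
    (hXY : ∀ k l : Fin (Dsum nn t), ((k : ℕ) < Dsum nn (j + 1) → (l : ℕ) < Dsum nn (j + 1)) →
      PadicInt.toZModPow r (Y k l) = PadicInt.toZModPow r (X k l)) :
    memIw p nn r Y := by
  have hblk : ∀ k l : Fin (Dsum nn t), bfun nn l ≤ bfun nn k →
      (k : ℕ) < Dsum nn (j + 1) → (l : ℕ) < Dsum nn (j + 1) := by
    intro k l hlk hk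
    rw [lt_Dsum_succ_iff] at hk ⊢
    exact hlk.trans hk
  refine ⟨fun k l hlk => ?_, fun k l hkl => ?_⟩
  · rw [redMat, map_apply, hXY k l (hblk k l hlk.le)]
    exact hX.1 hlk
  · rw [redMat, map_apply, hXY k l (hblk k l hkl.ge)]
    exact hX.2 k l hkl

theorem map_toZModPow_toBlocks₂₁_eq_zero {X : GL (Fin (Dsum nn t)) ℤ_[p]} (hX : memIw p nn r X)
    (hi : Dsum nn (j + 1) ≤ Dsum nn t) :
    ((X : Matrix _ _ ℤ_[p]).submatrix (finSplit hi) (finSplit hi)).toBlocks₂₁.map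
      (PadicInt.toZModPow r) = 0 := by
  ext a b
  refine hX.1 (?_ : bfun nn _ < bfun nn _)
  have hb := (lt_Dsum_succ_iff nn j _).1 (by simp : (finSplit hi (.inl b) : ℕ) < Dsum nn (j + 1))
  have ha := (lt_Dsum_succ_iff nn j _).not.1
    (by simp : ¬(finSplit hi (.inr a) : ℕ) < Dsum nn (j + 1))
  simp only [bfun]
  omega

theorem memIw_of_mul_blockScale_eq {X Y : GL (Fin (Dsum nn t)) ℤ_[p]} (hX : memIw p nn r X)
    (hi : Dsum nn (j + 1) ≤ Dsum nn t) {B : Matrix _ _ ℤ_[p]}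
    (h : (X : Matrix _ _ ℤ_[p]).submatrix (finSplit hi) (finSplit hi) * blockScale (p : ℤ_[p]) =
      fromBlocks 1 B 0 1 * blockScale (p : ℤ_[p]) *
        (Y : Matrix _ _ ℤ_[p]).submatrix (finSplit hi) (finSplit hi)) :
    memIw p nn r Y := by
  refine memIw_of_toZModPow_eq (j := j) hX fun k l hkl => ?_
  rw [← (finSplit hi).apply_symm_apply k, ← (finSplit hi).apply_symm_apply l]
  refine map_apply_eq_of_mul_blockScale_eq _ PadicInt.prime_p.ne_zero h
    (map_toZModPow_toBlocks₂₁_eq_zero hX hi) ?_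
  simpa [← val_finSplit_lt_iff hi] using hkl

end Iwahori

theorem iwahori_coset_decomposition {t : ℕ} (nn : Fin t → ℕ)
    (r : ℕ) (hr : 1 ≤ r) (j : Fin t)
    (X : GL (Fin (Dsum nn t)) ℤ_[p]) (hX : memIw p nn r X) :
    ∃! BY : Matrix (Fin (Dsum nn ((j : ℕ) + 1)))
        (Fin (Dsum nn t - Dsum nn ((j : ℕ) + 1))) ℕ × GL (Fin (Dsum nn t)) ℤ_[p],
      (∀ k l, BY.1 k l < p) ∧ memIw p nn r BY.2 ∧
        toQ p X.val =
          uMat p (Dsum nn t) (Dsum nn ((j : ℕ) + 1)) BY.1 *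
            (tMat p (Dsum nn t) (Dsum nn ((j : ℕ) + 1)) * toQ p BY.2.val *
              tInvMat p (Dsum nn t) (Dsum nn ((j : ℕ) + 1))) := by
  have hi : Dsum nn (j + 1) ≤ Dsum nn t := Dsum_mono nn j.2
  let Φ : GL (Fin (Dsum nn t)) ℤ_[p] ≃*
      GL (Fin (Dsum nn (j + 1)) ⊕ Fin (Dsum nn t - Dsum nn (j + 1))) ℤ_[p] :=
    Units.mapEquiv (reindexAlgEquiv ℤ_[p] ℤ_[p] (finSplit hi).symm).toMulEquiv
  simp_rw [toQ_eq_uMat_mul_conj_iff hi]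
  obtain ⟨⟨B, Y⟩, ⟨hB, hXY⟩, huniq⟩ := existsUnique_digits_mul_blockScale (Φ X)
    (map_toZMod_eq_zero_of_map_toZModPow_eq_zero hr (map_toZModPow_toBlocks₂₁_eq_zero hX hi))
  have hΦY : ((Φ.symm Y : Matrix _ _ ℤ_[p])).submatrix (finSplit hi) (finSplit hi) = Y := by
    simp [Φ]
  refine ⟨(B, Φ.symm Y), ⟨hB, memIw_of_mul_blockScale_eq hX hi (by rwa [hΦY]), by rwa [hΦY]⟩, ?_⟩
  rintro ⟨B', Y'⟩ ⟨hB', -, hXY'⟩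
  obtain ⟨rfl, hY'⟩ := Prod.ext_iff.1 (huniq (B', Φ Y') ⟨hB', hXY'⟩)
  simp only at hY' ⊢
  rw [← hY', MulEquiv.symm_apply_apply]

end PIw
end
end
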